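/- There are no Gaussian integers x, y, z with xyz ≠ 0 satisfying x^4 + y^4 = z^2. -/

import Mathlib

/-!
Let `π = 1 + i`, the prime of `ℤ[i]` above `2`, so that `2 = -iπ²` and `π⁴ = -4`. An element
prime to `π` has square `≡ ±1` and fourth power `≡ 1` mod 4, and the units are `±1, ±i`.

In a primitive solution, `x` and `y` cannot both be prime to `π`, since then `z² ≡ 2` mod 4.
So `y = π^n y₀`, and we descend on `n` through the equations `ηx⁴ + επ^(4m)y⁴ = z²` with units
`η, ε` and `x, y, z` prime to `π`. For `m = 0` these are impossible mod 4; for `m ≥ 1`, reduction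
mod 4 gives `η = ±1`, and we may take `η = 1`. Then `(z - x²)(z + x²) = επ^(4m)y⁴`, and since
`(z - x²) + (z + x²) = 2z`, one of the factors is exactly `π²` times its odd part. The two odd
parts are coprime, hence units times fourth powers `u⁴, v⁴`, and the difference of the factors,
`±2x²`, yields `x² = η'u⁴ + ε'π^(4(m-1))v⁴`.
-/

theorem Prime.le_of_pow_dvd_pow_mul {M : Type*} [CommMonoidWithZero M] [IsCancelMulZero M]
    {p c : M} (hp : Prime p) (hc : ¬p ∣ c) {s t : ℕ} (h : p ^ t ∣ p ^ s * c) : t ≤ s :=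
  (pow_dvd_pow_iff hp.ne_zero hp.not_isUnit).1 (hp.pow_dvd_of_dvd_mul_right t hc h)

theorem Prime.eq_of_pow_mul_add_pow_mul_eq {R : Type*} [CommRing R] [IsDomain R] {p a b c : R}
    (hp : Prime p) (ha : ¬p ∣ a) (hc : ¬p ∣ c) {s t k : ℕ} (hst : s < t)
    (h : p ^ s * a + p ^ t * b = p ^ k * c) : s = k := by
  obtain ⟨n, rfl⟩ := Nat.exists_eq_add_of_lt hst
  have h' : p ^ s * (a + p ^ (n + 1) * b) = p ^ k * c := by rw [← h]; ring
  have hnd : ¬p ∣ a + p ^ (n + 1) * b := by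
    rwa [dvd_add_left (dvd_mul_of_dvd_left (dvd_pow_self p n.succ_ne_zero) b)]
  exact le_antisymm (hp.le_of_pow_dvd_pow_mul hc (h' ▸ dvd_mul_right _ _))
    (hp.le_of_pow_dvd_pow_mul hnd (h' ▸ dvd_mul_right _ _))

theorem IsCoprime.exists_associated_pow_of_associated_pow_mul {R : Type*} [CommRing R]
    [IsBezout R] [IsDomain R] {a b c : R} (hab : IsCoprime a b) {k : ℕ} (hk : 0 < k)
    (h : Associated (c ^ k) (a * b)) :
    ∃ u v : R, IsCoprime u v ∧ Associated (u ^ k) a ∧ Associated (v ^ k) b := by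
  obtain ⟨u, hu⟩ := _root_.exists_associated_pow_of_associated_pow_mul hab h
  obtain ⟨v, hv⟩ :=
    _root_.exists_associated_pow_of_associated_pow_mul hab.symm (mul_comm a b ▸ h)
  refine ⟨u, v, (IsCoprime.pow_iff hk hk).1 ?_, hu, hv⟩
  exact (hab.of_isCoprime_of_dvd_left hu.dvd).of_isCoprime_of_dvd_right hv.dvd

theorem exists_isRelPrime_pow_four_add_pow_four_eq_sq {R : Type*} [CommRing R] [IsDomain R]
    [UniqueFactorizationMonoid R] {x y z : R} (hx : x ≠ 0) (hy : y ≠ 0)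
    (h : x ^ 4 + y ^ 4 = z ^ 2) :
    ∃ x' y' z' : R, IsRelPrime x' y' ∧ x' ≠ 0 ∧ y' ≠ 0 ∧ x' ^ 4 + y' ^ 4 = z' ^ 2 := by
  obtain ⟨x', y', c, hxy, rfl, rfl⟩ := UniqueFactorizationMonoid.exists_reduced_factors x hx y
  obtain ⟨z', rfl⟩ : c ^ 2 ∣ z := (IsIntegrallyClosed.pow_dvd_pow_iff two_ne_zero).1
    ⟨x' ^ 4 + y' ^ 4, by linear_combination -h⟩
  refine ⟨x', y', z', hxy, right_ne_zero_of_mul hx, right_ne_zero_of_mul hy, ?_⟩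
  exact mul_left_cancel₀ (pow_ne_zero 4 (left_ne_zero_of_mul hx)) (by linear_combination h)

local notation "ℤ[i]" => GaussianInt

open Zsqrtd (sqrtd)

local notation "π" => (1 + sqrtd : ℤ[i])

namespace GaussianInt

theorem sqrtd_mul_sqrtd : (sqrtd : ℤ[i]) * sqrtd = -1 := by decide

theorem one_add_sqrtd_pow_four : π ^ 4 = -4 := by decide

theorem two_eq_neg_sqrtd_mul_one_add_sqrtd_sq : (2 : ℤ[i]) = -sqrtd * π ^ 2 := by decide

theorem isUnit_iff {u : ℤ[i]} : IsUnit u ↔ u = 1 ∨ u = -1 ∨ u = sqrtd ∨ u = -sqrtd := by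
  rw [← Zsqrtd.norm_eq_one_iff' (by norm_num)]
  refine ⟨fun hu => ?_, by rintro (rfl | rfl | rfl | rfl) <;> decide⟩
  obtain ⟨a, b⟩ := u
  have hab : a * a + b * b = 1 := by simpa [Zsqrtd.norm] using hu
  obtain ⟨ha₁, ha₂⟩ : -1 ≤ a ∧ a ≤ 1 := by constructor <;> nlinarith
  obtain ⟨hb₁, hb₂⟩ : -1 ≤ b ∧ b ≤ 1 := by constructor <;> nlinarith
  interval_cases a <;> interval_cases b <;> simp_all <;> decide

theorem prime_one_add_sqrtd : Prime π := by
  have : IsLocalHom (Zsqrtd.normMonoidHom (d := -1)) :=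
    ⟨fun z hz => (Zsqrtd.isUnit_iff_norm_isUnit z).2 hz⟩
  refine (Irreducible.of_map (f := Zsqrtd.normMonoidHom (d := -1)) ?_).prime
  exact (show Zsqrtd.normMonoidHom π = 2 by decide) ▸ Int.prime_two.irreducible

theorem one_add_sqrtd_dvd_iff (x : ℤ[i]) : π ∣ x ↔ 2 ∣ x.re + x.im := by
  constructor
  · rintro ⟨w, rfl⟩
    exact ⟨w.re, by simp; ring⟩
  · rintro ⟨k, hk⟩
    refine ⟨⟨k, x.im - k⟩, ?_⟩
    ext
    · simp; omega
    · simp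

theorem four_dvd_iff (c : ℤ[i]) : (4 : ℤ[i]) ∣ c ↔ 4 ∣ c.re ∧ 4 ∣ c.im :=
  Zsqrtd.intCast_dvd 4 c

theorem exists_four_dvd_sq_sub {x : ℤ[i]} (hx : ¬π ∣ x) :
    ∃ s : ℤ[i], (s = 1 ∨ s = -1) ∧ 4 ∣ x ^ 2 - s := by
  rw [one_add_sqrtd_dvd_iff, ← even_iff_two_dvd, Int.not_even_iff_odd] at hx
  obtain ⟨a, b⟩ := x
  obtain ⟨k, hk⟩ := hx
  obtain rfl : b = 2 * k + 1 - a := by simp at hk; omega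
  simp only [exists_eq_or_imp, exists_eq_left, four_dvd_iff, pow_two, Zsqrtd.re_sub,
    Zsqrtd.im_sub, Zsqrtd.re_mul, Zsqrtd.im_mul, Zsqrtd.re_one, Zsqrtd.im_one, Zsqrtd.re_neg,
    Zsqrtd.im_neg]
  -- both conditions now only depend on `a` and `k` modulo 4
  rw [show (4 : ℤ) = (4 : ℕ) from rfl]
  simp only [← ZMod.intCast_zmod_eq_zero_iff_dvd]
  push_cast
  generalize (a : ZMod 4) = a
  generalize (k : ZMod 4) = k
  revert a k
  decide

theorem four_dvd_pow_four_sub_one {x : ℤ[i]} (hx : ¬π ∣ x) : 4 ∣ x ^ 4 - 1 := by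
  obtain ⟨s, rfl | rfl, hs⟩ := exists_four_dvd_sq_sub hx
  · exact hs.trans ⟨x ^ 2 + 1, by ring⟩
  · exact hs.trans ⟨x ^ 2 - 1, by ring⟩

theorem not_four_dvd_sq_sub_two (z : ℤ[i]) : ¬4 ∣ z ^ 2 - 2 := by
  rw [four_dvd_iff]
  rintro ⟨h, -⟩
  replace h := (ZMod.intCast_zmod_eq_zero_iff_dvd _ 4).2 h
  simp only [pow_two, Zsqrtd.re_sub, Zsqrtd.re_mul, Zsqrtd.re_ofNat] at h
  push_cast at h
  generalize (z.re : ZMod 4) = a at h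
  generalize (z.im : ZMod 4) = b at h
  revert a b
  decide

theorem eq_of_four_dvd_sub {η s : ℤ[i]} (hη : IsUnit η) (hs : s = 1 ∨ s = -1)
    (h : 4 ∣ η - s) : η = s := by
  rw [four_dvd_iff] at h
  rcases isUnit_iff.1 hη with rfl | rfl | rfl | rfl <;> rcases hs with rfl | rfl <;>
    revert h <;> decide

theorem not_four_dvd_add_sub {η ε s : ℤ[i]} (hη : IsUnit η) (hε : IsUnit ε)
    (hs : s = 1 ∨ s = -1) : ¬4 ∣ η + ε - s := by
  rw [four_dvd_iff]
  rcases isUnit_iff.1 hη with rfl | rfl | rfl | rfl <;>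
    rcases isUnit_iff.1 hε with rfl | rfl | rfl | rfl <;> rcases hs with rfl | rfl <;> decide

theorem isUnit_sqrtd : IsUnit (sqrtd : ℤ[i]) := isUnit_iff.2 (by simp)

theorem four_dvd_one_add_sqrtd_pow (m : ℕ) : 4 ∣ π ^ (4 * (m + 1)) := by
  rw [pow_mul, one_add_sqrtd_pow_four]
  exact dvd_pow (dvd_neg.2 dvd_rfl) m.succ_ne_zero

def HasOddSolution (m : ℕ) : Prop :=
  ∃ x y z η ε : ℤ[i], IsUnit η ∧ IsUnit ε ∧ ¬π ∣ x ∧ ¬π ∣ y ∧ ¬π ∣ z ∧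
    IsCoprime x y ∧ η * x ^ 4 + ε * π ^ (4 * m) * y ^ 4 = z ^ 2

theorem not_hasOddSolution_zero : ¬HasOddSolution 0 := by
  rintro ⟨x, y, z, η, ε, hη, hε, hx, hy, hz, -, h⟩
  obtain ⟨s, hs, hzs⟩ := exists_four_dvd_sq_sub hz
  refine not_four_dvd_add_sub hη hε hs ?_
  rw [show η + ε - s = (z ^ 2 - s) - η * (x ^ 4 - 1) - ε * (y ^ 4 - 1) by
    linear_combination h]
  exact dvd_sub (dvd_sub hzs (dvd_mul_of_dvd_right (four_dvd_pow_four_sub_one hx) η))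
    (dvd_mul_of_dvd_right (four_dvd_pow_four_sub_one hy) ε)

theorem hasOddSolution_of_sub_sq_eq {m : ℕ} {x y z a ε : ℤ[i]} (hε : IsUnit ε) (hx : ¬π ∣ x)
    (hy : ¬π ∣ y) (hxy : IsCoprime x y) (ha : ¬π ∣ a)
    (h : x ^ 4 + ε * π ^ (4 * (m + 1)) * y ^ 4 = z ^ 2) (hza : z - x ^ 2 = π ^ 2 * a) :
    HasOddSolution m := by
  have hπ := prime_one_add_sqrtd
  have hzb : z + x ^ 2 = π ^ 2 * (a - sqrtd * x ^ 2) := by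
    linear_combination hza + x ^ 2 * two_eq_neg_sqrtd_mul_one_add_sqrtd_sq
  have hprod : a * (a - sqrtd * x ^ 2) = π ^ (4 * m) * (ε * y ^ 4) := by
    refine mul_left_cancel₀ (pow_ne_zero 4 hπ.ne_zero) ?_
    linear_combination -h - π ^ 2 * (a - sqrtd * x ^ 2) * hza - (z - x ^ 2) * hzb
  obtain ⟨b, hb⟩ : π ^ (4 * m) ∣ a - sqrtd * x ^ 2 :=
    hπ.pow_dvd_of_dvd_mul_left _ ha ⟨_, hprod⟩
  have hab : a * b = ε * y ^ 4 :=
    mul_left_cancel₀ (pow_ne_zero _ hπ.ne_zero) (by rw [← hprod, hb]; ring)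
  have hcop : IsCoprime a b := by
    have hay : IsCoprime a x :=
      (((isCoprime_mul_unit_left_left hε _ _).2 hxy.symm.pow_left).of_isCoprime_of_dvd_left
        (hab ▸ dvd_mul_right a b))
    have : IsCoprime a (π ^ (4 * m) * b) := by
      rw [← hb, show a - sqrtd * x ^ 2 = -sqrtd * x ^ 2 + a * 1 by ring,
        IsCoprime.add_mul_left_right_iff, isCoprime_mul_unit_left_right isUnit_sqrtd.neg]
      exact hay.pow_right
    exact this.of_mul_right_right
  have hb' : ¬π ∣ b := fun hb' =>
    mt hε.dvd_mul_left.1 (mt hπ.dvd_of_dvd_pow hy) (hab ▸ dvd_mul_of_dvd_right hb' a)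
  obtain ⟨u, v, huv, ⟨wu, hu⟩, ⟨wv, hv⟩⟩ := hcop.exists_associated_pow_of_associated_pow_mul
    four_pos ⟨hε.unit, by rw [hab, IsUnit.unit_spec, mul_comm]⟩
  refine ⟨u, v, x, -sqrtd * (wu : ℤ[i]), sqrtd * (wv : ℤ[i]), isUnit_sqrtd.neg.mul wu.isUnit,
    isUnit_sqrtd.mul wv.isUnit, fun hu' => ha ?_, fun hv' => hb' ?_, hx, huv, ?_⟩
  · exact hu ▸ dvd_mul_of_dvd_left (dvd_pow hu' four_ne_zero) _
  · exact hv ▸ dvd_mul_of_dvd_left (dvd_pow hv' four_ne_zero) _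
  · linear_combination (-sqrtd) * hb - sqrtd * hu + sqrtd * π ^ (4 * m) * hv -
      x ^ 2 * sqrtd_mul_sqrtd

theorem hasOddSolution_of_eq {m : ℕ} {x y z ε : ℤ[i]} (hε : IsUnit ε) (hx : ¬π ∣ x)
    (hy : ¬π ∣ y) (hz : ¬π ∣ z) (hxy : IsCoprime x y)
    (h : x ^ 4 + ε * π ^ (4 * (m + 1)) * y ^ 4 = z ^ 2) : HasOddSolution m := by
  have hπ := prime_one_add_sqrtd
  have hprod : (z - x ^ 2) * (z + x ^ 2) = π ^ (4 * (m + 1)) * (ε * y ^ 4) := by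
    linear_combination -h
  have hεy : ¬π ∣ ε * y ^ 4 := mt hε.dvd_mul_left.1 (mt hπ.dvd_of_dvd_pow hy)
  have hne : π ^ (4 * (m + 1)) * (ε * y ^ 4) ≠ 0 :=
    mul_ne_zero (pow_ne_zero _ hπ.ne_zero) fun h0 => hεy (h0 ▸ dvd_zero _)
  obtain ⟨p, a, ha, hpa⟩ := WfDvdMonoid.max_power_factor
    (left_ne_zero_of_mul (hprod ▸ hne)) hπ.irreducible
  obtain ⟨q, b, hb, hqb⟩ := WfDvdMonoid.max_power_factor
    (right_ne_zero_of_mul (hprod ▸ hne)) hπ.irreducible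
  have hpq : 4 * (m + 1) ≤ p + q := by
    refine hπ.le_of_pow_dvd_pow_mul (c := a * b) (fun hab => ?_) ⟨ε * y ^ 4, ?_⟩
    · exact (hπ.dvd_or_dvd hab).elim ha hb
    · rw [← hprod, hpa, hqb]; ring
  have hsum : π ^ p * a + π ^ q * b = π ^ 2 * (-sqrtd * z) := by
    linear_combination -hpa - hqb + z * two_eq_neg_sqrtd_mul_one_add_sqrtd_sq
  have hz' : ¬π ∣ -sqrtd * z := mt isUnit_sqrtd.neg.dvd_mul_left.1 hz
  -- the valuations `p, q` add up to at least 4, while the sum `2z` has valuation exactly 2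
  have : p = 2 ∨ q = 2 := by
    rcases lt_trichotomy p q with hlt | rfl | hgt
    · exact .inl (hπ.eq_of_pow_mul_add_pow_mul_eq ha hz' hlt hsum)
    · have := hπ.le_of_pow_dvd_pow_mul hz' (t := p) ⟨a + b, by rw [← hsum]; ring⟩
      omega
    · exact .inr (hπ.eq_of_pow_mul_add_pow_mul_eq (b := a) hb hz' hgt
        (by linear_combination hsum))
  rcases this with rfl | rfl
  · exact hasOddSolution_of_sub_sq_eq hε hx hy hxy ha h hpa
  -- replacing `z` by `-z` turns `z + x²` into `-(z - x²)`
  · refine hasOddSolution_of_sub_sq_eq (z := -z) (a := -b) hε hx hy hxy (by rwa [dvd_neg]) ?_ ?_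
    · linear_combination h
    · linear_combination -hqb

theorem HasOddSolution.of_succ {m : ℕ} (h : HasOddSolution (m + 1)) : HasOddSolution m := by
  obtain ⟨x, y, z, η, ε, hη, hε, hx, hy, hz, hxy, h⟩ := h
  obtain ⟨s, hs, hzs⟩ := exists_four_dvd_sq_sub hz
  have : 4 ∣ η - s := by
    rw [show η - s = (z ^ 2 - s) - η * (x ^ 4 - 1) - ε * π ^ (4 * (m + 1)) * y ^ 4 by
      linear_combination h]
    exact dvd_sub (dvd_sub hzs (dvd_mul_of_dvd_right (four_dvd_pow_four_sub_one hx) η))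
      (dvd_mul_of_dvd_left (dvd_mul_of_dvd_right (four_dvd_one_add_sqrtd_pow m) ε) _)
  obtain rfl := eq_of_four_dvd_sub hη hs this
  rcases hs with rfl | rfl
  · exact hasOddSolution_of_eq hε hx hy hz hxy (by linear_combination h)
  · refine hasOddSolution_of_eq (z := sqrtd * z) hε.neg hx hy ?_ hxy ?_
    · exact mt isUnit_sqrtd.dvd_mul_left.1 hz
    · linear_combination -h - z ^ 2 * sqrtd_mul_sqrtd

theorem not_hasOddSolution : ∀ m, ¬HasOddSolution m
  | 0 => not_hasOddSolution_zero
  | m + 1 => fun h => not_hasOddSolution m h.of_succ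

theorem pow_four_add_pow_four_ne_sq_of_dvd {x y : ℤ[i]} (hx : ¬π ∣ x) (hy : π ∣ y)
    (hy0 : y ≠ 0) (hxy : IsCoprime x y) (z : ℤ[i]) : x ^ 4 + y ^ 4 ≠ z ^ 2 := by
  intro h
  have hπ := prime_one_add_sqrtd
  obtain ⟨n, y₀, hy₀, rfl⟩ := WfDvdMonoid.max_power_factor hy0 hπ.irreducible
  have hz : ¬π ∣ z := fun hz => hx <| hπ.dvd_of_dvd_pow (n := 4) <|
    (dvd_sub (dvd_pow hz two_ne_zero) (dvd_pow hy four_ne_zero)).trans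
      (dvd_of_eq (by linear_combination -h))
  exact not_hasOddSolution n ⟨x, y₀, z, 1, 1, isUnit_one, isUnit_one, hx, hy₀, hz,
    hxy.of_mul_right_right, by linear_combination h⟩

theorem pow_four_add_pow_four_ne_sq_of_not_dvd {x y : ℤ[i]} (hx : ¬π ∣ x) (hy : ¬π ∣ y)
    (z : ℤ[i]) : x ^ 4 + y ^ 4 ≠ z ^ 2 := fun h =>
  not_four_dvd_sq_sub_two z <| h ▸ (dvd_add (four_dvd_pow_four_sub_one hx)
    (four_dvd_pow_four_sub_one hy)).trans (dvd_of_eq (by ring))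

end GaussianInt

/-- Hilbert's result: the equation `x⁴ + y⁴ = z²` has only trivial solutions
in the Gaussian integers `ℤ[i]`. -/
theorem stmt_2 :
    ¬ ∃ x y z : GaussianInt, x * y * z ≠ 0 ∧ x ^ 4 + y ^ 4 = z ^ 2 := by
  rintro ⟨x, y, z, hxyz, h⟩
  have hxy0 := left_ne_zero_of_mul hxyz
  obtain ⟨x, y, z, hxy, hx0, hy0, h⟩ := exists_isRelPrime_pow_four_add_pow_four_eq_sq
    (left_ne_zero_of_mul hxy0) (right_ne_zero_of_mul hxy0) h
  by_cases hx : π ∣ x <;> by_cases hy : π ∣ y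
  · exact GaussianInt.prime_one_add_sqrtd.not_isUnit (hxy hx hy)
  · exact GaussianInt.pow_four_add_pow_four_ne_sq_of_dvd hy hx hx0 hxy.symm.isCoprime z
      (by linear_combination h)
  · exact GaussianInt.pow_four_add_pow_four_ne_sq_of_dvd hx hy hy0 hxy.isCoprime z h
  · exact GaussianInt.pow_four_add_pow_four_ne_sq_of_not_dvd hx hy z h
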